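/- arXiv:2403.17139 — 3 statements merged into one kernel-verified Lean document; each statement's English description precedes it below -/
import Mathlib

section
/- Let K ≥ 2 be even, let m ≥ 1 be an integer, set N = mK, and let α ∈ [0,1). Set K* = (NK/(2N+K))·(1 − α/(2−α)). Then any pure strategy of the Colonel Blotto game B_α(N,K) that allocates a strictly positive number of units to strictly fewer than K* battlefields is never a best response to any strategy of the opponent, and hence is not used with positive probability in any Nash equilibrium of B_α(N,K). -/
/-!
A pure strategy `s` supporting `c` battlefields wins at most those `c` and can at best tie on
the others, so against any opponent it earns at most `c + α/2 (K - c)`. The uniform mixture of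
the `2m + 1` strategies putting `x` units on half of the battlefields and `2m - x` on the other
half has uniform marginals on `{0, …, 2m}`, and therefore earns at least `(mK + αK/2)/(2m + 1)`
against every opponent. Below the threshold `K*` the first bound is the smaller one, so `s` is
never a best response. In an equilibrium each player's strategy is a best response whose value
is the average of the payoffs of its support, so every pure strategy in its support is a best
response too; hence `s` has probability zero.
-/

open Finset

/-- The set of pure strategies: allocations of `N` units of the resource
over `K` battlefields. -/
def pureStrats (K N : ℕ) : Finset (Fin K → ℕ) := Finset.Nat.antidiagonalTuple K N

/-- Payoff in the Colonel Blotto game `B_α(N,K)` of playing `s` against `t`: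
`π(s,t) = Σ_k [1_{s_k > t_k} + (α/2)·1_{s_k = t_k}]`. -/
noncomputable def payoff (α : ℝ) {K : ℕ} (s t : Fin K → ℕ) : ℝ :=
  ∑ k, ((if t k < s k then (1 : ℝ) else 0) + α / 2 * (if s k = t k then 1 else 0))

/-- `σ` is a mixed strategy: a probability distribution on the pure strategies. -/
def IsMixed (K N : ℕ) (σ : (Fin K → ℕ) → ℝ) : Prop :=
  (∀ s, 0 ≤ σ s) ∧ (∀ s, s ∉ pureStrats K N → σ s = 0) ∧
    ∑ s ∈ pureStrats K N, σ s = 1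

/-- Expected payoff of the mixed strategy `σ` against the mixed strategy `τ`. -/
noncomputable def expPayoff (α : ℝ) (K N : ℕ) (σ τ : (Fin K → ℕ) → ℝ) : ℝ :=
  ∑ s ∈ pureStrats K N, ∑ t ∈ pureStrats K N, σ s * τ t * payoff α s t

/-- `(σA, σB)` is a mixed-strategy Nash equilibrium: both are mixed strategies and
neither player can strictly improve by a unilateral deviation. -/
def IsNashEq (α : ℝ) (K N : ℕ) (σA σB : (Fin K → ℕ) → ℝ) : Prop :=
  IsMixed K N σA ∧ IsMixed K N σB ∧
    (∀ σ', IsMixed K N σ' → expPayoff α K N σ' σB ≤ expPayoff α K N σA σB) ∧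
    (∀ τ', IsMixed K N τ' → expPayoff α K N τ' σA ≤ expPayoff α K N σB σA)

/-- The marginal distribution of `σ` at battlefield `k`, evaluated at `x`. -/
noncomputable def marginal (K N : ℕ) (σ : (Fin K → ℕ) → ℝ) (k : Fin K) (x : ℕ) : ℝ :=
  ∑ s ∈ (pureStrats K N).filter (fun s => s k = x), σ s

/-- `σ` induces uniform marginals on `{0,1,…,2m}` at every battlefield. -/
def UniformMarginals (K N m : ℕ) (σ : (Fin K → ℕ) → ℝ) : Prop :=
  ∀ k x, marginal K N σ k x = if x ≤ 2 * m then (1 : ℝ) / (2 * m + 1) else 0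

/-- Expected payoff of the pure strategy `s` against the mixed strategy `τ`. -/
noncomputable def purePayoff (α : ℝ) (K N : ℕ) (s : Fin K → ℕ) (τ : (Fin K → ℕ) → ℝ) : ℝ :=
  ∑ t ∈ pureStrats K N, τ t * payoff α s t

section MixedStrategies

variable {α : ℝ} {K N : ℕ}

lemma expPayoff_eq_sum_mul_purePayoff (σ τ : (Fin K → ℕ) → ℝ) :
    expPayoff α K N σ τ = ∑ s ∈ pureStrats K N, σ s * purePayoff α K N s τ := by
  simp only [expPayoff, purePayoff, mul_sum, mul_assoc]

lemma IsMixed.sum_mul_le {σ : (Fin K → ℕ) → ℝ} (hσ : IsMixed K N σ) {f : (Fin K → ℕ) → ℝ}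
    {b : ℝ} (hf : ∀ s ∈ pureStrats K N, f s ≤ b) :
    ∑ s ∈ pureStrats K N, σ s * f s ≤ b :=
  calc ∑ s ∈ pureStrats K N, σ s * f s ≤ ∑ s ∈ pureStrats K N, σ s * b :=
        sum_le_sum fun s hs => mul_le_mul_of_nonneg_left (hf s hs) (hσ.1 s)
    _ = b := by rw [← sum_mul, hσ.2.2, one_mul]

lemma IsMixed.le_sum_mul {σ : (Fin K → ℕ) → ℝ} (hσ : IsMixed K N σ) {f : (Fin K → ℕ) → ℝ}
    {b : ℝ} (hf : ∀ s ∈ pureStrats K N, b ≤ f s) :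
    b ≤ ∑ s ∈ pureStrats K N, σ s * f s :=
  calc b = ∑ s ∈ pureStrats K N, σ s * b := by rw [← sum_mul, hσ.2.2, one_mul]
    _ ≤ ∑ s ∈ pureStrats K N, σ s * f s :=
        sum_le_sum fun s hs => mul_le_mul_of_nonneg_left (hf s hs) (hσ.1 s)

lemma isMixed_pi_single {s : Fin K → ℕ} (hs : s ∈ pureStrats K N) :
    IsMixed K N (Pi.single s 1) := by
  refine ⟨fun u => ?_, fun u hu => ?_, ?_⟩
  · by_cases h : u = s <;> simp [h]
  · exact Pi.single_eq_of_ne (ne_of_mem_of_not_mem hs hu).symm _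
  · rw [sum_pi_single', if_pos hs]

lemma expPayoff_pi_single {s : Fin K → ℕ} (hs : s ∈ pureStrats K N) (τ : (Fin K → ℕ) → ℝ) :
    expPayoff α K N (Pi.single s 1) τ = purePayoff α K N s τ := by
  simp only [expPayoff_eq_sum_mul_purePayoff, Pi.single_apply, ite_mul, one_mul, zero_mul,
    sum_ite_eq', if_pos hs]

lemma IsMixed.eq_zero_of_purePayoff_lt {σ τ σ' : (Fin K → ℕ) → ℝ} (hσ : IsMixed K N σ)
    (hopt : ∀ σ'', IsMixed K N σ'' → expPayoff α K N σ'' τ ≤ expPayoff α K N σ τ)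
    (hσ' : IsMixed K N σ') {s : Fin K → ℕ} (hlt : purePayoff α K N s τ < expPayoff α K N σ' τ) :
    σ s = 0 := by
  by_contra hne
  set V := expPayoff α K N σ τ
  have hs : s ∈ pureStrats K N := by_contra fun h => hne (hσ.2.1 s h)
  have hpure : ∀ u ∈ pureStrats K N, purePayoff α K N u τ ≤ V := fun u hu =>
    expPayoff_pi_single hu τ ▸ hopt _ (isMixed_pi_single hu)
  have hgap : ∑ u ∈ pureStrats K N, σ u * (V - purePayoff α K N u τ) = 0 := by
    simp only [mul_sub, sum_sub_distrib, ← sum_mul, hσ.2.2, one_mul, V,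
      ← expPayoff_eq_sum_mul_purePayoff, sub_self]
  have hterm := (sum_eq_zero_iff_of_nonneg fun u hu =>
    mul_nonneg (hσ.1 u) (sub_nonneg.2 (hpure u hu))).1 hgap s hs
  have hVs : V = purePayoff α K N s τ := by
    rcases mul_eq_zero.1 hterm with h | h
    · exact absurd h hne
    · linarith
  linarith [hopt σ' hσ']

noncomputable def uniformMix {ι : Type*} (f : ι → Fin K → ℕ) (I : Finset ι) :
    (Fin K → ℕ) → ℝ :=
  fun u => (∑ x ∈ I, if f x = u then (1 : ℝ) else 0) / #I

variable {ι : Type*} {f : ι → Fin K → ℕ} {I : Finset ι}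

lemma sum_uniformMix_mul (hf : ∀ x ∈ I, f x ∈ pureStrats K N) (g : (Fin K → ℕ) → ℝ) :
    ∑ u ∈ pureStrats K N, uniformMix f I u * g u = (∑ x ∈ I, g (f x)) / #I := by
  simp only [uniformMix, div_mul_eq_mul_div, ← sum_div, sum_mul, ite_mul, one_mul, zero_mul]
  rw [sum_comm]
  exact congrArg (· / _) (sum_congr rfl fun x hx => by rw [sum_ite_eq, if_pos (hf x hx)])

lemma isMixed_uniformMix (hI : I.Nonempty) (hf : ∀ x ∈ I, f x ∈ pureStrats K N) :
    IsMixed K N (uniformMix f I) := by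
  refine ⟨fun u => ?_, fun u hu => ?_, ?_⟩
  · exact div_nonneg (sum_nonneg fun x _ => by split_ifs <;> norm_num) (Nat.cast_nonneg _)
  · refine div_eq_zero_iff.2 (Or.inl (sum_eq_zero fun x hx => if_neg ?_))
    rintro rfl
    exact hu (hf x hx)
  · simpa [hI.card_ne_zero] using sum_uniformMix_mul hf (fun _ => 1)

lemma expPayoff_uniformMix (hf : ∀ x ∈ I, f x ∈ pureStrats K N) (τ : (Fin K → ℕ) → ℝ) :
    expPayoff α K N (uniformMix f I) τ = (∑ x ∈ I, purePayoff α K N (f x) τ) / #I := by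
  rw [expPayoff_eq_sum_mul_purePayoff, sum_uniformMix_mul hf]

end MixedStrategies

section Blotto

variable {α : ℝ}

noncomputable def fieldPayoff (α : ℝ) (a b : ℕ) : ℝ :=
  (if b < a then 1 else 0) + α / 2 * (if a = b then 1 else 0)

lemma payoff_eq_sum_fieldPayoff {K : ℕ} (s t : Fin K → ℕ) :
    payoff α s t = ∑ k, fieldPayoff α (s k) (t k) := rfl

lemma fieldPayoff_le (hα0 : 0 ≤ α) (hα2 : α ≤ 2) (a b : ℕ) :
    fieldPayoff α a b ≤ if 0 < a then 1 else α / 2 := by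
  unfold fieldPayoff
  split_ifs <;> first | omega | linarith

lemma payoff_le_card_support (hα0 : 0 ≤ α) (hα2 : α ≤ 2) {K : ℕ} (s t : Fin K → ℕ) :
    payoff α s t ≤ (#{k | 0 < s k} : ℝ) + α / 2 * (K - #{k | 0 < s k}) := by
  have hcard : (K : ℝ) = #{k | 0 < s k} + #{k | ¬ 0 < s k} := by
    have := card_filter_add_card_filter_not (s := univ) (fun k => 0 < s k)
    rw [card_univ, Fintype.card_fin] at this
    exact_mod_cast this.symm
  calc payoff α s t ≤ ∑ k, if 0 < s k then (1 : ℝ) else α / 2 :=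
        sum_le_sum fun k _ => fieldPayoff_le hα0 hα2 (s k) (t k)
    _ = _ := by
        rw [sum_ite, sum_const, sum_const, nsmul_eq_mul, nsmul_eq_mul, hcard]
        ring

lemma sum_range_fieldPayoff (n y : ℕ) :
    ∑ a ∈ range n, fieldPayoff α a y = (n - (y + 1) : ℕ) + α / 2 * (if y < n then 1 else 0) := by
  have hwin : {a ∈ range n | y < a} = Ioo y n := by
    ext a
    simp only [mem_filter, mem_range, mem_Ioo]
    omega
  simp only [fieldPayoff, sum_add_distrib, ← mul_sum, sum_ite_eq', mem_range, sum_boole, hwin,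
    Nat.card_Ioo, Nat.sub_sub]

lemma le_sum_range_fieldPayoff (hα2 : α ≤ 2) (n y : ℕ) :
    (n : ℝ) - 1 - y + α / 2 ≤ ∑ a ∈ range n, fieldPayoff α a y := by
  rw [sum_range_fieldPayoff]
  by_cases hy : y < n
  · rw [Nat.cast_sub hy, if_pos hy]
    push_cast
    linarith
  · rw [if_neg hy, Nat.sub_eq_zero_of_le (by omega)]
    have : (n : ℝ) ≤ y := by exact_mod_cast (not_lt.1 hy)
    push_cast
    linarith

def splitStrat (K m x : ℕ) : Fin K → ℕ := fun k => if (k : ℕ) < K / 2 then x else 2 * m - x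

lemma splitStrat_mem {K : ℕ} (hK : Even K) (m : ℕ) {x : ℕ} (hx : x ≤ 2 * m) :
    splitStrat K m x ∈ pureStrats K (m * K) := by
  obtain ⟨j, rfl⟩ := hK
  rw [pureStrats, Nat.mem_antidiagonalTuple]
  simp only [splitStrat]
  rw [Fin.sum_univ_eq_sum_range (fun i => if i < (j + j) / 2 then x else 2 * m - x), sum_range_add]
  have hj : (j + j) / 2 = j := by omega
  simp only [hj, sum_ite_of_true (fun i hi => mem_range.1 hi),
    sum_ite_of_false (fun i _ => by omega : ∀ i ∈ range j, ¬ j + i < j), sum_const, card_range,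
    smul_eq_mul]
  rw [← mul_add, Nat.add_sub_cancel' hx]
  ring

lemma le_sum_range_fieldPayoff_splitStrat (hα2 : α ≤ 2) (K m : ℕ) (k : Fin K) (y : ℕ) :
    2 * (m : ℝ) - y + α / 2 ≤ ∑ x ∈ range (2 * m + 1), fieldPayoff α (splitStrat K m x k) y := by
  have hperm : ∑ x ∈ range (2 * m + 1), fieldPayoff α (splitStrat K m x k) y =
      ∑ a ∈ range (2 * m + 1), fieldPayoff α a y := by
    by_cases hk : (k : ℕ) < K / 2
    · simp only [splitStrat, if_pos hk]
    · simp only [splitStrat, if_neg hk]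
      rw [← sum_range_reflect]
      exact sum_congr rfl fun x hx => by
        rw [mem_range] at hx
        congr 2
        omega
  rw [hperm]
  have := le_sum_range_fieldPayoff hα2 (2 * m + 1) y
  push_cast at this
  linarith

lemma le_sum_payoff_splitStrat (hα2 : α ≤ 2) {K m : ℕ} {t : Fin K → ℕ}
    (ht : t ∈ pureStrats K (m * K)) :
    (m : ℝ) * K + α * K / 2 ≤ ∑ x ∈ range (2 * m + 1), payoff α (splitStrat K m x) t := by
  have hsum : ∑ k, (t k : ℝ) = m * K := by
    exact_mod_cast Nat.mem_antidiagonalTuple.1 ht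
  calc (m : ℝ) * K + α * K / 2 = ∑ k, (2 * (m : ℝ) - t k + α / 2) := by
        rw [sum_add_distrib, sum_sub_distrib, hsum]
        simp only [sum_const, card_univ, Fintype.card_fin, nsmul_eq_mul]
        ring
    _ ≤ ∑ k, ∑ x ∈ range (2 * m + 1), fieldPayoff α (splitStrat K m x k) (t k) :=
        sum_le_sum fun k _ => le_sum_range_fieldPayoff_splitStrat hα2 K m k (t k)
    _ = _ := by simp only [payoff_eq_sum_fieldPayoff, sum_comm (s := range _)]

end Blotto

/-- `K* = NK/(2N+K) · (1 - α/(2-α))` is the number of supported battlefields at which the bound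
of `payoff_le_card_support` meets the value `(mK + αK/2)/(2m+1)` of the uniform split. -/
lemma card_support_bound_lt {c K m α : ℝ} (hc : 0 ≤ c) (hK : 0 ≤ K) (hm : 0 ≤ m) (hα : α < 2)
    (h : c < m * K * K / (2 * (m * K) + K) * (1 - α / (2 - α))) :
    c + α / 2 * (K - c) < (m * K + α * K / 2) / (2 * m + 1) := by
  rcases hK.eq_or_lt with rfl | hK
  · simp at h
    linarith
  have h2α : 0 < 2 - α := by linarith
  have hthreshold : m * K * K / (2 * (m * K) + K) * (1 - α / (2 - α)) =
      2 * m * K * (1 - α) / ((2 * m + 1) * (2 - α)) := by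
    rw [show 2 * (m * K) + K = (2 * m + 1) * K by ring]
    field_simp
    ring
  rw [hthreshold, lt_div_iff₀ (by positivity)] at h
  rw [lt_div_iff₀ (by positivity)]
  nlinarith

section Values

variable {α : ℝ} {K N : ℕ} {τ : (Fin K → ℕ) → ℝ}

lemma purePayoff_le_card_support (hα0 : 0 ≤ α) (hα2 : α ≤ 2) (hτ : IsMixed K N τ)
    (s : Fin K → ℕ) :
    purePayoff α K N s τ ≤ (#{k | 0 < s k} : ℝ) + α / 2 * (K - #{k | 0 < s k}) :=
  hτ.sum_mul_le fun t _ => payoff_le_card_support hα0 hα2 s t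

lemma splitStrat_mem_of_mem_range (hK : Even K) (m : ℕ) :
    ∀ x ∈ range (2 * m + 1), splitStrat K m x ∈ pureStrats K (m * K) :=
  fun _ hx => splitStrat_mem hK m (Nat.lt_succ_iff.1 (mem_range.1 hx))

lemma le_expPayoff_uniformMix_splitStrat (hK : Even K) (hα2 : α ≤ 2) {m : ℕ}
    (hτ : IsMixed K (m * K) τ) :
    ((m : ℝ) * K + α * K / 2) / (2 * m + 1) ≤
      expPayoff α K (m * K) (uniformMix (splitStrat K m) (range (2 * m + 1))) τ := by
  have hsum : ∑ x ∈ range (2 * m + 1), purePayoff α K (m * K) (splitStrat K m x) τ =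
      ∑ t ∈ pureStrats K (m * K), τ t * ∑ x ∈ range (2 * m + 1), payoff α (splitStrat K m x) t := by
    simp only [purePayoff, mul_sum]
    exact sum_comm
  rw [expPayoff_uniformMix (splitStrat_mem_of_mem_range hK m), card_range, hsum]
  push_cast
  gcongr
  exact hτ.le_sum_mul fun t ht => le_sum_payoff_splitStrat hα2 ht

end Values

theorem stmt5_general (K m N : ℕ) (hKeven : Even K) (hN : N = m * K)
    (α : ℝ) (hα0 : 0 ≤ α) (hα1 : α < 1)
    (s : Fin K → ℕ)
    (hfew : (((Finset.univ.filter (fun k => 0 < s k)).card : ℝ)) <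
      ((N : ℝ) * K / (2 * (N : ℝ) + K)) * (1 - α / (2 - α))) :
    (∀ τ, IsMixed K N τ →
      ¬ (∀ σ', IsMixed K N σ' → expPayoff α K N σ' τ ≤ purePayoff α K N s τ)) ∧
    (∀ σA σB, IsNashEq α K N σA σB → σA s = 0 ∧ σB s = 0) := by
  subst hN
  set σ := uniformMix (splitStrat K m) (range (2 * m + 1))
  have hσ : IsMixed K (m * K) σ :=
    isMixed_uniformMix nonempty_range_add_one (splitStrat_mem_of_mem_range hKeven m)
  push_cast at hfew
  have hgap := card_support_bound_lt (Nat.cast_nonneg _) (Nat.cast_nonneg K) (Nat.cast_nonneg m)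
    (by linarith) hfew
  have hbeaten : ∀ τ, IsMixed K (m * K) τ →
      purePayoff α K (m * K) s τ < expPayoff α K (m * K) σ τ := fun τ hτ =>
    ((purePayoff_le_card_support hα0 (by linarith) hτ s).trans_lt hgap).trans_le
      (le_expPayoff_uniformMix_splitStrat hKeven (by linarith) hτ)
  refine ⟨fun τ hτ hbest => (hbeaten τ hτ).not_ge (hbest σ hσ), ?_⟩
  rintro σA σB ⟨hA, hB, hoptA, hoptB⟩
  exact ⟨hA.eq_zero_of_purePayoff_lt hoptA hσ (hbeaten σB hB),
    hB.eq_zero_of_purePayoff_lt hoptB hσ (hbeaten σA hA)⟩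

theorem stmt5 (K m N : ℕ) (hK : 2 ≤ K) (hKeven : Even K) (hm : 1 ≤ m) (hN : N = m * K)
    (α : ℝ) (hα0 : 0 ≤ α) (hα1 : α < 1)
    (s : Fin K → ℕ) (hs : s ∈ pureStrats K N)
    (hfew : (((Finset.univ.filter (fun k => 0 < s k)).card : ℝ)) <
      ((N : ℝ) * K / (2 * (N : ℝ) + K)) * (1 - α / (2 - α))) :
    (∀ τ, IsMixed K N τ →
      ¬ (∀ σ', IsMixed K N σ' → expPayoff α K N σ' τ ≤ purePayoff α K N s τ)) ∧
    (∀ σA σB, IsNashEq α K N σA σB → σA s = 0 ∧ σB s = 0) :=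
  stmt5_general K m N hKeven hN α hα0 hα1 s hfew
end

section
/- Let K ≥ 2 be any integer (even or odd), let m ≥ 1 be an integer, set N = mK, and let α ∈ [0,2]. Then the Colonel Blotto game B_α(N,K) has a symmetric equilibrium strategy σ that induces uniform marginals, and in the resulting equilibrium each player's expected payoff equals K·(m + α/2)/(2m + 1). -/
open Finset

/-!
Suppose `σ` has uniform marginals on `{0,…,2m}`. Against `σ`, a battlefield receiving `x` units
earns at most `(x + α/2)/(2m+1)` when `α ≥ 0`, with equality for `x ≤ 2m`. Summing over the
battlefields, every pure strategy earns at most `K(m + α/2)/(2m+1)`, with equality on the support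
of `σ`, so `σ` is a best reply to itself. Such a `σ` is the uniform mixture of `2m+1` pure
strategies whose battlefield coordinates, as functions of the index `j ∈ {0,…,2m}`, are
permutations of `{0,…,2m}` summing to `mK` for every `j`.
-/

section Payoff

variable {K N m : ℕ} {α : ℝ} {σ : (Fin K → ℕ) → ℝ}

lemma expPayoff_eq_sum_mul (α : ℝ) (K N : ℕ) (τ σ : (Fin K → ℕ) → ℝ) :
    expPayoff α K N τ σ =
      ∑ s ∈ pureStrats K N, τ s * ∑ t ∈ pureStrats K N, σ t * payoff α s t := by
  simp only [expPayoff, mul_sum, mul_assoc]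

lemma sum_marginal_eq (k : Fin K) (A : Finset ℕ) :
    ∑ x ∈ A, marginal K N σ k x = ∑ t ∈ pureStrats K N, if t k ∈ A then σ t else 0 := by
  simp only [marginal, sum_filter]
  rw [sum_comm]
  exact sum_congr rfl fun t _ => sum_ite_eq A (t k) fun _ => σ t

lemma sum_mul_payoff_eq_sum_marginal (α : ℝ) (s : Fin K → ℕ) :
    ∑ t ∈ pureStrats K N, σ t * payoff α s t =
      ∑ k, (∑ x ∈ range (s k), marginal K N σ k x + α / 2 * marginal K N σ k (s k)) := by
  simp only [payoff, mul_sum]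
  rw [sum_comm]
  refine sum_congr rfl fun k _ => ?_
  have hsingle := sum_marginal_eq (N := N) (σ := σ) k {s k}
  rw [sum_singleton] at hsingle
  rw [sum_marginal_eq, hsingle, mul_sum, ← sum_add_distrib]
  refine sum_congr rfl fun t _ => ?_
  rcases lt_trichotomy (t k) (s k) with h | h | h
  · simp [h, h.ne, h.ne']
  · simp [h, mul_comm]
  · simp [h.ne, h.ne', h.not_gt]

lemma sum_range_uniform_add_le (hα : 0 ≤ α) (y : ℕ) :
    ∑ x ∈ range y, (if x ≤ 2 * m then (1 : ℝ) / (2 * m + 1) else 0) +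
        α / 2 * (if y ≤ 2 * m then (1 : ℝ) / (2 * m + 1) else 0) ≤
      (y + α / 2) / (2 * m + 1) := by
  have hle : ∀ x : ℕ, (if x ≤ 2 * m then (1 : ℝ) / (2 * m + 1) else 0) ≤ 1 / (2 * m + 1) :=
    fun x => by split_ifs <;> first | rfl | positivity
  calc _ ≤ ∑ x ∈ range y, (1 : ℝ) / (2 * m + 1) + α / 2 * (1 / (2 * m + 1)) :=
        add_le_add (sum_le_sum fun x _ => hle x) (by gcongr; exact hle y)
    _ = (y + α / 2) / (2 * m + 1) := by rw [sum_const, card_range, nsmul_eq_mul]; ring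

lemma sum_range_uniform_add_eq {y : ℕ} (hy : y ≤ 2 * m) :
    ∑ x ∈ range y, (if x ≤ 2 * m then (1 : ℝ) / (2 * m + 1) else 0) +
        α / 2 * (if y ≤ 2 * m then (1 : ℝ) / (2 * m + 1) else 0) =
      (y + α / 2) / (2 * m + 1) := by
  rw [sum_congr rfl fun x hx => if_pos (by rw [mem_range] at hx; omega), if_pos hy,
    sum_const, card_range, nsmul_eq_mul]
  ring

lemma sum_add_div_of_mem_pureStrats (hN : N = m * K) {s : Fin K → ℕ} (hs : s ∈ pureStrats K N) :
    ∑ k, ((s k : ℝ) + α / 2) / (2 * m + 1) = K * (m + α / 2) / (2 * m + 1) := by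
  rw [pureStrats, Nat.mem_antidiagonalTuple] at hs
  have hsum : ∑ k, (s k : ℝ) = m * K := by exact_mod_cast hs.trans hN
  rw [← sum_div, sum_add_distrib, hsum, sum_const, card_univ, Fintype.card_fin, nsmul_eq_mul]
  ring

lemma sum_mul_payoff_le_of_uniformMarginals (hα : 0 ≤ α) (hN : N = m * K)
    (hu : UniformMarginals K N m σ) {s : Fin K → ℕ} (hs : s ∈ pureStrats K N) :
    ∑ t ∈ pureStrats K N, σ t * payoff α s t ≤ K * (m + α / 2) / (2 * m + 1) := by
  rw [sum_mul_payoff_eq_sum_marginal, ← sum_add_div_of_mem_pureStrats hN hs]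
  refine sum_le_sum fun k _ => ?_
  simp only [hu k]
  exact sum_range_uniform_add_le hα (s k)

lemma sum_mul_payoff_eq_of_uniformMarginals (hN : N = m * K)
    (hu : UniformMarginals K N m σ) {s : Fin K → ℕ} (hs : s ∈ pureStrats K N)
    (hle : ∀ k, s k ≤ 2 * m) :
    ∑ t ∈ pureStrats K N, σ t * payoff α s t = K * (m + α / 2) / (2 * m + 1) := by
  rw [sum_mul_payoff_eq_sum_marginal, ← sum_add_div_of_mem_pureStrats hN hs]
  refine sum_congr rfl fun k _ => ?_
  simp only [hu k]
  exact sum_range_uniform_add_eq (hle k)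

lemma le_of_uniformMarginals_of_ne_zero (hσ : ∀ s, 0 ≤ σ s) (hu : UniformMarginals K N m σ)
    {s : Fin K → ℕ} (hs : s ∈ pureStrats K N) (hs0 : σ s ≠ 0) (k : Fin K) : s k ≤ 2 * m := by
  by_contra hgt
  have hmarg : σ s ≤ marginal K N σ k (s k) :=
    single_le_sum (fun t _ => hσ t) (mem_filter.mpr ⟨hs, rfl⟩)
  rw [hu k (s k), if_neg hgt] at hmarg
  exact hs0 (le_antisymm hmarg (hσ s))

lemma expPayoff_le_of_uniformMarginals (hα : 0 ≤ α) (hN : N = m * K)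
    (hu : UniformMarginals K N m σ) {τ : (Fin K → ℕ) → ℝ} (hτ : IsMixed K N τ) :
    expPayoff α K N τ σ ≤ K * (m + α / 2) / (2 * m + 1) := by
  rw [expPayoff_eq_sum_mul]
  calc _ ≤ ∑ s ∈ pureStrats K N, τ s * (K * (m + α / 2) / (2 * m + 1)) :=
        sum_le_sum fun s hs => mul_le_mul_of_nonneg_left
          (sum_mul_payoff_le_of_uniformMarginals hα hN hu hs) (hτ.1 s)
    _ = K * (m + α / 2) / (2 * m + 1) := by rw [← sum_mul, hτ.2.2, one_mul]

lemma expPayoff_self_of_uniformMarginals (hN : N = m * K) (hσ : IsMixed K N σ)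
    (hu : UniformMarginals K N m σ) :
    expPayoff α K N σ σ = K * (m + α / 2) / (2 * m + 1) := by
  rw [expPayoff_eq_sum_mul]
  calc _ = ∑ s ∈ pureStrats K N, σ s * (K * (m + α / 2) / (2 * m + 1)) := by
        refine sum_congr rfl fun s hs => ?_
        rcases eq_or_ne (σ s) 0 with h0 | h0
        · simp [h0]
        · rw [sum_mul_payoff_eq_of_uniformMarginals hN hu hs
            (le_of_uniformMarginals_of_ne_zero hσ.1 hu hs h0)]
    _ = K * (m + α / 2) / (2 * m + 1) := by rw [← sum_mul, hσ.2.2, one_mul]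

theorem isNashEq_of_uniformMarginals (hα : 0 ≤ α) (hN : N = m * K) (hσ : IsMixed K N σ)
    (hu : UniformMarginals K N m σ) : IsNashEq α K N σ σ := by
  have hbest : ∀ τ, IsMixed K N τ → expPayoff α K N τ σ ≤ expPayoff α K N σ σ := fun τ hτ => by
    rw [expPayoff_self_of_uniformMarginals hN hσ hu]
    exact expPayoff_le_of_uniformMarginals hα hN hu hτ
  exact ⟨hσ, hσ, hbest, hbest⟩

end Payoff

section UniformMixture

variable {K N : ℕ}

noncomputable def uniformMixture (n : ℕ) (f : ℕ → Fin K → ℕ) : (Fin K → ℕ) → ℝ :=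
  fun s => (∑ j ∈ range n, if f j = s then 1 else 0) / n

variable {n : ℕ} {f : ℕ → Fin K → ℕ}

lemma isMixed_uniformMixture (hn : 0 < n) (hf : ∀ j ∈ range n, f j ∈ pureStrats K N) :
    IsMixed K N (uniformMixture n f) := by
  refine ⟨fun s => by unfold uniformMixture; positivity, fun s hs => ?_, ?_⟩
  · refine div_eq_zero_iff.mpr (Or.inl (sum_eq_zero fun j hj => if_neg ?_))
    rintro rfl
    exact hs (hf j hj)
  · simp only [uniformMixture, ← sum_div]
    rw [sum_comm, sum_congr rfl fun j _ => sum_ite_eq (pureStrats K N) (f j) fun _ => (1 : ℝ)]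
    rw [sum_congr rfl fun j hj => if_pos (hf j hj), sum_const, card_range, nsmul_one]
    exact div_self (by positivity)

lemma marginal_uniformMixture (hf : ∀ j ∈ range n, f j ∈ pureStrats K N) (k : Fin K) (x : ℕ) :
    marginal K N (uniformMixture n f) k x = (∑ j ∈ range n, if f j k = x then 1 else 0) / n := by
  simp only [marginal, uniformMixture, ← sum_div]
  rw [sum_comm]
  refine congrArg (· / (n : ℝ)) (sum_congr rfl fun j hj => ?_)
  simp [hf j hj]

lemma uniformMarginals_uniformMixture {m : ℕ} (hf : ∀ j ∈ range (2 * m + 1), f j ∈ pureStrats K N)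
    (hbij : ∀ k, Set.BijOn (f · k) (range (2 * m + 1)) (range (2 * m + 1))) :
    UniformMarginals K N m (uniformMixture (2 * m + 1) f) := by
  intro k x
  rw [marginal_uniformMixture hf, sum_nbij (f · k) (hbij k).mapsTo (hbij k).injOn (hbij k).surjOn
    (g := fun y => if y = x then (1 : ℝ) else 0) fun _ _ => rfl, sum_ite_eq']
  simp only [mem_range, Nat.lt_succ_iff]
  split_ifs <;> push_cast <;> simp

end UniformMixture

lemma sum_range_two_mul_of_add_eq {M : Type*} [AddCommMonoid M] (g : ℕ → M) (c : M) (n : ℕ)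
    (h : ∀ i < n, g (2 * i) + g (2 * i + 1) = c) : ∑ k ∈ range (2 * n), g k = n • c := by
  induction n with
  | zero => simp
  | succ n ih =>
    rw [Nat.mul_succ, sum_range_succ, sum_range_succ, add_assoc, h n n.lt_succ_self,
      ih fun i hi => h i (hi.trans n.lt_succ_self), succ_nsmul]

/-- Battlefield `k` of the `j`-th pure strategy. For odd `K` the first three battlefields sum to
`3m`; the others pair up as `j` and `2m - j`. -/
def blottoColumn (K m k j : ℕ) : ℕ :=
  if K % 2 = 1 ∧ k < 3 then
    if k = 0 then j
    else if k = 1 then (if j < m then j + m + 1 else j - m)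
    else (if j < m then 2 * m - (2 * j + 1) else 4 * m - 2 * j)
  else if k % 2 = K % 2 then j else 2 * m - j

lemma blottoColumn_bijOn (K m k : ℕ) :
    Set.BijOn (blottoColumn K m k) (range (2 * m + 1)) (range (2 * m + 1)) := by
  have hmaps : Set.MapsTo (blottoColumn K m k) (range (2 * m + 1) : Set ℕ) (range (2 * m + 1)) := by
    intro j hj
    simp only [coe_range, Set.mem_Iio] at hj ⊢
    unfold blottoColumn
    split_ifs <;> omega
  refine ((range (2 * m + 1)).finite_toSet.injOn_iff_bijOn_of_mapsTo hmaps).mp fun i hi j hj h => ?_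
  simp only [coe_range, Set.mem_Iio] at hi hj
  unfold blottoColumn at h
  split_ifs at h <;> omega

lemma sum_blottoColumn {K m j : ℕ} (hK : 2 ≤ K) (hj : j ≤ 2 * m) :
    ∑ k ∈ range K, blottoColumn K m k j = m * K := by
  rcases Nat.even_or_odd' K with ⟨n, rfl | rfl⟩
  · rw [sum_range_two_mul_of_add_eq _ (2 * m) n fun i _ => by
      unfold blottoColumn; split_ifs <;> omega, smul_eq_mul]
    ring
  · obtain ⟨n, rfl⟩ : ∃ n', n = n' + 1 := ⟨n - 1, by omega⟩
    rw [show 2 * (n + 1) + 1 = 3 + 2 * n by ring, sum_range_add,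
      sum_range_two_mul_of_add_eq _ (2 * m) n fun i _ => by
        unfold blottoColumn; split_ifs <;> omega, smul_eq_mul]
    have hhead : ∑ k ∈ range 3, blottoColumn (3 + 2 * n) m k j = 3 * m := by
      norm_num [sum_range_succ, blottoColumn]
      split_ifs <;> omega
    rw [hhead]
    ring

lemma exists_isMixed_uniformMarginals {K m N : ℕ} (hK : 2 ≤ K) (hN : N = m * K) :
    ∃ σ, IsMixed K N σ ∧ UniformMarginals K N m σ := by
  have hf : ∀ j ∈ range (2 * m + 1), (fun k : Fin K => blottoColumn K m k j) ∈ pureStrats K N := by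
    intro j hj
    rw [mem_range] at hj
    rw [pureStrats, Nat.mem_antidiagonalTuple, Fin.sum_univ_eq_sum_range (blottoColumn K m · j),
      sum_blottoColumn hK (by omega), hN]
  exact ⟨_, isMixed_uniformMixture (Nat.succ_pos _) hf,
    uniformMarginals_uniformMixture hf fun k => blottoColumn_bijOn K m k⟩

theorem stmt10_general (K m N : ℕ) (hK : 2 ≤ K) (hN : N = m * K)
    (α : ℝ) (hα : α ∈ Set.Icc (0 : ℝ) 2) :
    ∃ σ, UniformMarginals K N m σ ∧ IsNashEq α K N σ σ ∧
      expPayoff α K N σ σ = (K : ℝ) * ((m : ℝ) + α / 2) / (2 * (m : ℝ) + 1) := by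
  obtain ⟨σ, hσ, hu⟩ := exists_isMixed_uniformMarginals hK hN
  exact ⟨σ, hu, isNashEq_of_uniformMarginals hα.1 hN hσ hu,
    expPayoff_self_of_uniformMarginals hN hσ hu⟩

theorem stmt10 (K m N : ℕ) (hK : 2 ≤ K) (hm : 1 ≤ m) (hN : N = m * K)
    (α : ℝ) (hα : α ∈ Set.Icc (0 : ℝ) 2) :
    ∃ σ, UniformMarginals K N m σ ∧ IsNashEq α K N σ σ ∧
      expPayoff α K N σ σ = (K : ℝ) * ((m : ℝ) + α / 2) / (2 * (m : ℝ) + 1) :=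
  stmt10_general K m N hK hN α hα
end

section
/- Let K ≥ 2 be even, let m ≥ 1 be an integer, and set N = mK. Then a pure strategy s of the constant-sum Colonel Blotto game B_1(N,K) is used with positive probability in some Nash equilibrium if and only if s_k ≤ 2N/K for every battlefield k. -/
open Finset

/-!
A mixed strategy whose marginal on every battlefield is uniform on `{0, …, 2m}` earns, on a
battlefield where the opponent puts `y` units, `(2m - y + 1/2)/(2m + 1)` if `y ≤ 2m` and
strictly more than this (namely `0`) if `y > 2m`. Summed over an allocation of `N = mK` units
the formula gives `K/2`. So such a strategy guarantees `K/2` in this constant-sum game, any two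
of them form an equilibrium, and no equilibrium strategy can put weight on an allocation with a
coordinate above `2m`, since the uniform strategy would then earn more than `K/2` against it.

Conversely, for `K = 2L` every allocation `s` with `s k ≤ 2m` is in the support of such a
strategy: pair battlefield `i` with `L + i`, and mix uniformly over the `2m + 1` allocations
obtained by raising the first and lowering the second by a common amount modulo `2m + 1`. The
amounts are rotated pair by pair so that, in every allocation, the wrap-arounds that add
`2m + 1` and those that subtract it are equally many, which keeps the total at `N`.
-/

lemma mem_pureStrats {K N : ℕ} {s : Fin K → ℕ} : s ∈ pureStrats K N ↔ ∑ k, s k = N :=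
  Nat.mem_antidiagonalTuple

lemma natCast_le_two_mul_div_iff {K m : ℕ} (hK : K ≠ 0) (y : ℕ) :
    (y : ℝ) ≤ 2 * ((m * K : ℕ) : ℝ) / K ↔ y ≤ 2 * m := by
  have : (K : ℝ) ≠ 0 := Nat.cast_ne_zero.2 hK
  rw [show 2 * ((m * K : ℕ) : ℝ) / K = ((2 * m : ℕ) : ℝ) by push_cast; field_simp]
  exact Nat.cast_le

lemma payoff_add_payoff_swap {K : ℕ} (s t : Fin K → ℕ) : payoff 1 s t + payoff 1 t s = K := by
  have hbattle : ∀ x y : ℕ, ((if y < x then (1 : ℝ) else 0) + 1 / 2 * (if x = y then 1 else 0))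
      + ((if x < y then 1 else 0) + 1 / 2 * (if y = x then 1 else 0)) = 1 := by
    intro x y
    rcases lt_trichotomy x y with h | rfl | h
    · simp [h, h.ne, h.ne', h.not_gt]
    · norm_num
    · simp [h, h.ne, h.ne', h.not_gt]
  rw [payoff, payoff, ← sum_add_distrib]
  simp only [hbattle]
  simp

lemma expPayoff_add_expPayoff_swap {K N : ℕ} {σ τ : (Fin K → ℕ) → ℝ} (hσ : IsMixed K N σ)
    (hτ : IsMixed K N τ) : expPayoff 1 K N σ τ + expPayoff 1 K N τ σ = K := by
  calc expPayoff 1 K N σ τ + expPayoff 1 K N τ σ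
      = ∑ s ∈ pureStrats K N, σ s * ∑ t ∈ pureStrats K N, τ t * (payoff 1 s t + payoff 1 t s) := by
        rw [expPayoff, expPayoff, sum_comm (s := pureStrats K N) (t := pureStrats K N)
          (f := fun t s => τ t * σ s * payoff 1 t s), ← sum_add_distrib]
        refine sum_congr rfl fun s _ => ?_
        rw [mul_sum, ← sum_add_distrib]
        exact sum_congr rfl fun t _ => by ring
    _ = K := by simp [payoff_add_payoff_swap, ← sum_mul, hσ.2.2, hτ.2.2]

/-- The expected payoff, on one battlefield, of an allocation uniform on `{0, …, 2m}` against an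
allocation of `y` units. -/
noncomputable def uniformValue (m y : ℕ) : ℝ :=
  (((2 * m - y : ℕ) : ℝ) + if y ≤ 2 * m then 1 / 2 else 0) / (2 * m + 1)

lemma sum_mul_eq_of_uniformMarginals {K N m : ℕ} {σ : (Fin K → ℕ) → ℝ}
    (hu : UniformMarginals K N m σ) (k : Fin K) (g : ℕ → ℝ) :
    ∑ s ∈ pureStrats K N, σ s * g (s k) = (∑ x ∈ range (2 * m + 1), g x) / (2 * m + 1) := by
  have hmaps : ∀ s ∈ pureStrats K N, s k ∈ range (N + 2 * m + 1) := fun s hs => by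
    have := (single_le_sum (fun i _ => Nat.zero_le (s i)) (mem_univ k)).trans_eq
      (mem_pureStrats.1 hs)
    rw [mem_range]; omega
  rw [← sum_fiberwise_of_maps_to hmaps]
  have hfiber : ∀ x, ∑ s ∈ pureStrats K N with s k = x, σ s * g (s k)
      = (if x ≤ 2 * m then (1 : ℝ) / (2 * m + 1) else 0) * g x := fun x => by
    rw [← hu k x, marginal, sum_mul]
    exact sum_congr rfl fun s hs => by rw [(mem_filter.1 hs).2]
  simp only [hfiber, ite_mul, zero_mul, ← sum_filter]
  rw [sum_div, show (range (N + 2 * m + 1)).filter (· ≤ 2 * m) = range (2 * m + 1) by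
    ext x; simp only [mem_filter, mem_range]; omega]
  exact sum_congr rfl fun x _ => by ring

lemma sum_mul_payoff_of_uniformMarginals {K N m : ℕ} {σ : (Fin K → ℕ) → ℝ}
    (hu : UniformMarginals K N m σ) (t : Fin K → ℕ) :
    ∑ s ∈ pureStrats K N, σ s * payoff 1 s t = ∑ k, uniformValue m (t k) := by
  simp_rw [payoff, mul_sum]
  rw [sum_comm]
  refine sum_congr rfl fun k _ => ?_
  rw [sum_mul_eq_of_uniformMarginals hu k
    (fun x => (if t k < x then 1 else 0) + 1 / 2 * (if x = t k then 1 else 0)), uniformValue,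
    sum_add_distrib, sum_boole, ← mul_sum, sum_ite_eq' (range (2 * m + 1)) (t k) fun _ => (1 : ℝ)]
  congr 2
  · rw [show (range (2 * m + 1)).filter (t k < ·) = Ioo (t k) (2 * m + 1) by
      ext x; simp only [mem_filter, mem_range, mem_Ioo]; omega, Nat.card_Ioo]
    congr 1; omega
  · simp only [mem_range, Nat.lt_succ_iff]
    split_ifs <;> norm_num

lemma div_le_uniformValue (m y : ℕ) : (2 * m - y + 1 / 2 : ℝ) / (2 * m + 1) ≤ uniformValue m y := by
  rw [uniformValue]
  gcongr ?_ / _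
  split_ifs with h
  · rw [Nat.cast_sub h]
    push_cast
    rfl
  · have : (2 * m + 1 : ℝ) ≤ y := by exact_mod_cast not_le.1 h
    linarith [(Nat.cast_nonneg (2 * m - y) : (0 : ℝ) ≤ _)]

lemma div_lt_uniformValue {m y : ℕ} (h : 2 * m < y) :
    (2 * m - y + 1 / 2 : ℝ) / (2 * m + 1) < uniformValue m y := by
  rw [uniformValue, if_neg h.not_ge, Nat.sub_eq_zero_of_le h.le]
  have : (2 * m + 1 : ℝ) ≤ y := by exact_mod_cast h
  gcongr ?_ / _
  push_cast
  linarith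

lemma sum_div_eq_half {K N m : ℕ} (hN : N = m * K) {t : Fin K → ℕ} (ht : t ∈ pureStrats K N) :
    ∑ k, (2 * m - t k + 1 / 2 : ℝ) / (2 * m + 1) = K / 2 := by
  have hsum : ∑ k, (t k : ℝ) = m * K := by exact_mod_cast (mem_pureStrats.1 ht).trans hN
  rw [← sum_div, sum_add_distrib, sum_sub_distrib, hsum]
  simp only [sum_const, card_univ, Fintype.card_fin, nsmul_eq_mul]
  field_simp
  ring

lemma expPayoff_eq_of_uniformMarginals {K N m : ℕ} {σ : (Fin K → ℕ) → ℝ}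
    (hu : UniformMarginals K N m σ) (τ : (Fin K → ℕ) → ℝ) :
    expPayoff 1 K N σ τ = ∑ t ∈ pureStrats K N, τ t * ∑ k, uniformValue m (t k) := by
  rw [expPayoff, sum_comm]
  refine sum_congr rfl fun t _ => ?_
  rw [← sum_mul_payoff_of_uniformMarginals hu, mul_sum]
  exact sum_congr rfl fun s _ => by ring

lemma half_le_expPayoff_of_uniformMarginals {K N m : ℕ} (hN : N = m * K)
    {σ τ : (Fin K → ℕ) → ℝ} (hu : UniformMarginals K N m σ) (hτ : IsMixed K N τ) :
    (K / 2 : ℝ) ≤ expPayoff 1 K N σ τ := by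
  calc (K / 2 : ℝ) = ∑ t ∈ pureStrats K N, τ t * (K / 2) := by rw [← sum_mul, hτ.2.2, one_mul]
    _ ≤ _ := by
      rw [expPayoff_eq_of_uniformMarginals hu]
      refine sum_le_sum fun t ht => mul_le_mul_of_nonneg_left ?_ (hτ.1 t)
      rw [← sum_div_eq_half hN ht]
      exact sum_le_sum fun k _ => div_le_uniformValue m (t k)

lemma half_lt_expPayoff_of_uniformMarginals {K N m : ℕ} (hN : N = m * K)
    {σ τ : (Fin K → ℕ) → ℝ} (hu : UniformMarginals K N m σ) (hτ : IsMixed K N τ)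
    {t : Fin K → ℕ} (ht : 0 < τ t) {k : Fin K} (hk : 2 * m < t k) :
    (K / 2 : ℝ) < expPayoff 1 K N σ τ := by
  have ht_mem : t ∈ pureStrats K N := by
    by_contra h
    exact ht.ne' (hτ.2.1 t h)
  calc (K / 2 : ℝ) = ∑ t ∈ pureStrats K N, τ t * (K / 2) := by rw [← sum_mul, hτ.2.2, one_mul]
    _ < _ := by
      rw [expPayoff_eq_of_uniformMarginals hu]
      refine sum_lt_sum (fun u hu => mul_le_mul_of_nonneg_left ?_ (hτ.1 u))
        ⟨t, ht_mem, mul_lt_mul_of_pos_left ?_ ht⟩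
      · rw [← sum_div_eq_half hN hu]
        exact sum_le_sum fun k _ => div_le_uniformValue m (u k)
      · rw [← sum_div_eq_half hN ht_mem]
        exact sum_lt_sum (fun k _ => div_le_uniformValue m (t k))
          ⟨k, mem_univ k, div_lt_uniformValue hk⟩

lemma expPayoff_le_half_of_uniformMarginals {K N m : ℕ} (hN : N = m * K)
    {σ τ : (Fin K → ℕ) → ℝ} (hσ : IsMixed K N σ) (hu : UniformMarginals K N m σ)
    (hτ : IsMixed K N τ) : expPayoff 1 K N τ σ ≤ K / 2 := by
  linarith [expPayoff_add_expPayoff_swap hσ hτ, half_le_expPayoff_of_uniformMarginals hN hu hτ]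

lemma IsNashEq.symm {α : ℝ} {K N : ℕ} {σA σB : (Fin K → ℕ) → ℝ} (h : IsNashEq α K N σA σB) :
    IsNashEq α K N σB σA :=
  ⟨h.2.1, h.1, h.2.2.2, h.2.2.1⟩

lemma isNashEq_of_uniformMarginals_s14 {K N m : ℕ} (hN : N = m * K) {σA σB : (Fin K → ℕ) → ℝ}
    (hA : IsMixed K N σA) (huA : UniformMarginals K N m σA)
    (hB : IsMixed K N σB) (huB : UniformMarginals K N m σB) : IsNashEq 1 K N σA σB :=
  ⟨hA, hB,
    fun _ h => (expPayoff_le_half_of_uniformMarginals hN hB huB h).trans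
      (half_le_expPayoff_of_uniformMarginals hN huA hB),
    fun _ h => (expPayoff_le_half_of_uniformMarginals hN hA huA h).trans
      (half_le_expPayoff_of_uniformMarginals hN huB hA)⟩

lemma le_two_mul_of_isNashEq {K N m : ℕ} (hN : N = m * K) {σA σB μ : (Fin K → ℕ) → ℝ}
    (h : IsNashEq 1 K N σA σB) (hμ : IsMixed K N μ) (huμ : UniformMarginals K N m μ)
    {s : Fin K → ℕ} (hs : 0 < σA s) (k : Fin K) : s k ≤ 2 * m := by
  by_contra! hk
  have hB := half_le_expPayoff_of_uniformMarginals hN huμ h.2.1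
  have hA := half_lt_expPayoff_of_uniformMarginals hN huμ h.1 hs hk
  linarith [h.2.2.1 μ hμ, h.2.2.2 μ hμ, expPayoff_add_expPayoff_swap h.1 h.2.1]

lemma card_filter_eq_of_injective {R : Type*} [Fintype R] {n : ℕ} (hR : Fintype.card R = n + 1)
    {f : R → ℕ} (hf : Function.Injective f) (hle : ∀ r, f r ≤ n) (x : ℕ) :
    #{r | f r = x} = if x ≤ n then 1 else 0 := by
  split_ifs with hx
  · have hbij : Function.Bijective fun r => (⟨f r, Nat.lt_succ_of_le (hle r)⟩ : Fin (n + 1)) :=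
      (Fintype.bijective_iff_injective_and_card _).2
        ⟨fun r r' h => hf (congrArg Fin.val h), by rw [hR, Fintype.card_fin]⟩
    obtain ⟨r₀, hr₀⟩ := hbij.2 ⟨x, Nat.lt_succ_of_le hx⟩
    rw [card_eq_one]
    refine ⟨r₀, eq_singleton_iff_unique_mem.2 ⟨by simpa using congrArg Fin.val hr₀, ?_⟩⟩
    intro r hr
    exact hf ((mem_filter.1 hr).2.trans (congrArg Fin.val hr₀).symm)
  · rw [card_eq_zero, filter_eq_empty_iff]
    intro r _ hr
    exact hx (hr ▸ hle r)

lemma exists_isMixed_uniformMarginals_of_columns {K N m : ℕ} {R : Type*} [Fintype R]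
    (hR : Fintype.card R = 2 * m + 1) (row : R → Fin K → ℕ) (hrow : ∀ r, row r ∈ pureStrats K N)
    (hcol : ∀ k, Function.Injective fun r => row r k) (hle : ∀ r k, row r k ≤ 2 * m) :
    ∃ ν, IsMixed K N ν ∧ UniformMarginals K N m ν ∧ ∀ r, 0 < ν (row r) := by
  refine ⟨fun t => (#{r | row r = t} : ℝ) / (2 * m + 1), ⟨fun t => by positivity, ?_, ?_⟩, ?_, ?_⟩
  · intro t ht
    have : ∀ r, row r ≠ t := fun r h => ht (h ▸ hrow r)
    simp [this]
  · rw [← sum_div, ← Nat.cast_sum, sum_card_fiberwise_eq_card_filter,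
      filter_true_of_mem fun r _ => hrow r, card_univ, hR]
    field_simp
    push_cast
    ring
  · intro k x
    have hfilter : #{r | row r ∈ {t ∈ pureStrats K N | t k = x}} = #{r | row r k = x} := by
      congr 1
      exact filter_congr fun r _ => by simp [hrow r]
    rw [marginal, ← sum_div, ← Nat.cast_sum, sum_card_fiberwise_eq_card_filter, hfilter,
      card_filter_eq_of_injective hR (hcol k) (fun r => hle r k)]
    split_ifs <;> simp
  · intro r
    have : 0 < #{r' | row r' = row r} := card_pos.2 ⟨r, by simp⟩
    positivity

lemma card_filter_le_eq_iff {ι : Type*} (S : Finset ι) (α β v : ι → ℕ) :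
    #{i ∈ S | α i ≤ v i} = #{i ∈ S | β i ≤ v i} ↔
      #{i ∈ S | v i ∈ Ico (α i) (β i)} = #{i ∈ S | v i ∈ Ico (β i) (α i)} := by
  have hsplit : ∀ i ∈ S, (if α i ≤ v i then 1 else 0) + (if v i ∈ Ico (β i) (α i) then 1 else 0)
      = (if β i ≤ v i then 1 else 0) + (if v i ∈ Ico (α i) (β i) then 1 else 0) := by
    intro i _
    simp only [mem_Ico]
    split_ifs <;> omega
  have h := sum_congr rfl hsplit
  simp only [sum_add_distrib, ← card_filter] at h
  omega

lemma card_filter_range_natCast_add_eq {n : ℕ} [NeZero n] {c : ℕ} (hc : c ≤ n) (P : ℕ)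
    (x : ZMod n) :
    #{q ∈ range c | ((P + q : ℕ) : ZMod n) = x} = if (x - P).val < c then 1 else 0 := by
  have hshift : ∀ q ∈ range c, ((P + q : ℕ) : ZMod n) = x ↔ q = (x - P).val := by
    intro q hq
    have hqn : q < n := (mem_range.1 hq).trans_le hc
    constructor
    · rintro rfl
      simp [ZMod.val_natCast_of_lt hqn]
    · rintro rfl
      simp
  rw [filter_congr hshift, filter_eq', apply_ite card, card_singleton, card_empty]
  exact if_congr mem_range rfl rfl

lemma sum_ite_val_sub_partialSum_lt {n : ℕ} [NeZero n] (c : ℕ → ℕ) (L : ℕ)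
    (hc : ∀ i < L, c i ≤ n) (x : ZMod n) :
    ∑ i ∈ range L, (if (x - (∑ j ∈ range i, c j : ℕ)).val < c i then 1 else 0)
      = #{p ∈ range (∑ i ∈ range L, c i) | ((p : ℕ) : ZMod n) = x} := by
  induction L with
  | zero => simp
  | succ L ih =>
    rw [sum_range_succ, ih (fun i hi => hc i (by omega)), sum_range_succ,
      ← card_filter_range_natCast_add_eq (hc L (by omega)), range_add_eq_union, filter_union,
      card_union_of_disjoint (disjoint_filter_filter (disjoint_range_addLeftEmbedding _ _)),
      filter_map, card_map]
    rfl

lemma val_add_natCast_sub_mem_Ico_iff {n : ℕ} [NeZero n] {lo hi : ℕ} (h : hi ≤ n) (x : ZMod n)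
    (P : ℕ) : (x + ((lo : ZMod n) - P)).val ∈ Ico lo hi ↔ (x - P).val < hi - lo := by
  rcases le_or_gt hi lo with hle | hlt
  · simp [Ico_eq_empty_of_le hle, Nat.sub_eq_zero_of_le hle]
  have hy := ZMod.val_lt (x - (P : ZMod n))
  rw [← add_comm_sub, ZMod.val_add, ZMod.val_natCast_of_lt (by omega), mem_Ico]
  rcases lt_or_ge ((x - P).val + lo) n with hwrap | hwrap
  · rw [Nat.mod_eq_of_lt hwrap]; omega
  · rw [Nat.mod_eq_sub_mod hwrap, Nat.mod_eq_of_lt (by omega)]; omega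

lemma exists_shift_card_le_eq {n : ℕ} [NeZero n] (L : ℕ) (α β : ℕ → ℕ)
    (hα : ∀ i < L, α i ≤ n) (hβ : ∀ i < L, β i ≤ n)
    (hsum : ∑ i ∈ range L, α i = ∑ i ∈ range L, β i) :
    ∃ r : ℕ → ZMod n, ∀ x : ZMod n,
      #{i ∈ range L | α i ≤ (x + r i).val} = #{i ∈ range L | β i ≤ (x + r i).val} := by
  -- The windows `[α i, β i)` are laid end to end along `ℕ`, and so are the windows `[β i, α i)`;
  -- `r i` rotates the block of pair `i` onto its window. Both layouts have the same total length,
  -- so modulo `n` they cover every residue equally often.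
  set up : ℕ → ℕ := fun i => β i - α i
  set down : ℕ → ℕ := fun i => α i - β i
  set r : ℕ → ZMod n := fun i =>
    if α i ≤ β i then (α i : ZMod n) - (∑ j ∈ range i, up j : ℕ)
    else (β i : ZMod n) - (∑ j ∈ range i, down j : ℕ)
  refine ⟨r, fun x => (card_filter_le_eq_iff _ _ _ _).2 ?_⟩
  have hwindow : ∀ i < L,
      ((x + r i).val ∈ Ico (α i) (β i) ↔ (x - (∑ j ∈ range i, up j : ℕ)).val < up i) ∧
      ((x + r i).val ∈ Ico (β i) (α i) ↔ (x - (∑ j ∈ range i, down j : ℕ)).val < down i) := by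
    intro i hi
    by_cases hαβ : α i ≤ β i
    · simp only [r, if_pos hαβ]
      exact ⟨val_add_natCast_sub_mem_Ico_iff (hβ i hi) x _,
        by simp [down, Nat.sub_eq_zero_of_le hαβ, Ico_eq_empty_of_le hαβ]⟩
    · simp only [r, if_neg hαβ]
      have hβα := le_of_not_ge hαβ
      exact ⟨by simp [up, Nat.sub_eq_zero_of_le hβα, Ico_eq_empty_of_le hβα],
        val_add_natCast_sub_mem_Ico_iff (hα i hi) x _⟩
  have htotal : ∑ i ∈ range L, up i = ∑ i ∈ range L, down i := by
    have h := sum_congr rfl fun i (_ : i ∈ range L) =>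
      show up i + α i = down i + β i by simp only [up, down]; omega
    rw [sum_add_distrib, sum_add_distrib, hsum] at h
    omega
  rw [card_filter, card_filter,
    sum_congr rfl fun i hi => if_congr (hwindow i (mem_range.1 hi)).1 rfl rfl,
    sum_congr rfl fun i hi => if_congr (hwindow i (mem_range.1 hi)).2 rfl rfl,
    sum_ite_val_sub_partialSum_lt up L (fun i hi => (Nat.sub_le _ _).trans (hβ i hi)),
    sum_ite_val_sub_partialSum_lt down L (fun i hi => (Nat.sub_le _ _).trans (hα i hi)), htotal]

-- `n - a ≤ v` says that `a + (v + 1)` wraps around, `b ≤ v` that `b - (v + 1)` does.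
lemma val_natCast_add_add_val_natCast_sub {n a b v : ℕ} (ha : a ≤ n) (hb : b ≤ n) (hv : v < n) :
    ((a : ZMod (n + 1)) + (v + 1 : ℕ)).val + ((b : ZMod (n + 1)) - (v + 1 : ℕ)).val
      + (n + 1) * (if n - a ≤ v then 1 else 0) = a + b + (n + 1) * (if b ≤ v then 1 else 0) := by
  have hneg : (b : ZMod (n + 1)) - (v + 1 : ℕ) = (b + n - v : ℕ) := by
    rw [Nat.cast_sub (by omega), ← sub_eq_zero]
    have := ZMod.natCast_self (n + 1)
    push_cast at this ⊢
    linear_combination -this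
  have hmod : ∀ y < 2 * (n + 1), y % (n + 1) = if y < n + 1 then y else y - (n + 1) := by
    intro y hy
    split_ifs with h
    · exact Nat.mod_eq_of_lt h
    · rw [Nat.mod_eq_sub_mod (by omega), Nat.mod_eq_of_lt (by omega)]
  rw [hneg, ← Nat.cast_add, ZMod.val_natCast, ZMod.val_natCast, hmod _ (by omega),
    hmod _ (by omega)]
  split_ifs <;> omega

def pairShift (L n : ℕ) (a b : ℕ → ℕ) (e : ℕ → ZMod (n + 1)) : Fin (L + L) → ℕ :=
  Fin.addCases (fun i => ((a i : ZMod (n + 1)) + e i).val)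
    fun i => ((b i : ZMod (n + 1)) - e i).val

lemma pairShift_le (L n : ℕ) (a b : ℕ → ℕ) (e : ℕ → ZMod (n + 1)) (k : Fin (L + L)) :
    pairShift L n a b e k ≤ n := by
  apply Nat.le_of_lt_succ
  induction k using Fin.addCases with
  | left i => simpa only [pairShift, Fin.addCases_left] using ZMod.val_lt _
  | right i => simpa only [pairShift, Fin.addCases_right] using ZMod.val_lt _

lemma injective_pairShift {L n : ℕ} (a b : ℕ → ℕ) {R : Type*} {e : ℕ → R → ZMod (n + 1)}
    (he : ∀ i, Function.Injective (e i)) (k : Fin (L + L)) :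
    Function.Injective fun x => pairShift L n a b (fun i => e i x) k := by
  induction k using Fin.addCases with
  | left i =>
    simp only [pairShift, Fin.addCases_left]
    exact (ZMod.val_injective _).comp ((add_right_injective _).comp (he i))
  | right i =>
    simp only [pairShift, Fin.addCases_right]
    exact (ZMod.val_injective _).comp (sub_right_injective.comp (he i))

lemma sum_pairShift (L n : ℕ) (a b : ℕ → ℕ) (e : ℕ → ZMod (n + 1)) :
    ∑ k, pairShift L n a b e k
      = ∑ i ∈ range L, (((a i : ZMod (n + 1)) + e i).val + ((b i : ZMod (n + 1)) - e i).val) := by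
  rw [Fin.sum_univ_add, ← Fin.sum_univ_eq_sum_range, ← sum_add_distrib]
  simp only [pairShift, Fin.addCases_left, Fin.addCases_right]

lemma sum_pairShift_zero {L n : ℕ} {a b : ℕ → ℕ} (ha : ∀ i < L, a i ≤ n)
    (hb : ∀ i < L, b i ≤ n) : ∑ k, pairShift L n a b 0 k = ∑ i ∈ range L, (a i + b i) := by
  rw [sum_pairShift]
  refine sum_congr rfl fun i hi => ?_
  simp [ZMod.val_natCast_of_lt (Nat.lt_succ_of_le (ha i (mem_range.1 hi))),
    ZMod.val_natCast_of_lt (Nat.lt_succ_of_le (hb i (mem_range.1 hi)))]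

lemma sum_pairShift_natCast_succ {L n : ℕ} {a b : ℕ → ℕ} (ha : ∀ i < L, a i ≤ n)
    (hb : ∀ i < L, b i ≤ n) {v : ℕ → ℕ} (hv : ∀ i, v i < n)
    (hcount : #{i ∈ range L | n - a i ≤ v i} = #{i ∈ range L | b i ≤ v i}) :
    ∑ k, pairShift L n a b (fun i => (v i + 1 : ℕ)) k = ∑ i ∈ range L, (a i + b i) := by
  have h := sum_congr rfl fun i (hi : i ∈ range L) =>
    val_natCast_add_add_val_natCast_sub (ha i (mem_range.1 hi)) (hb i (mem_range.1 hi)) (hv i)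
  simp only [sum_add_distrib, ← mul_sum, sum_boole, hcount] at h
  rw [sum_pairShift, sum_add_distrib, sum_add_distrib]
  omega

lemma exists_pairShift_zero_eq {L n : ℕ} {s : Fin (L + L) → ℕ} (hs : ∀ k, s k ≤ n) :
    ∃ a b : ℕ → ℕ, (∀ i < L, a i ≤ n) ∧ (∀ i < L, b i ≤ n) ∧ pairShift L n a b 0 = s := by
  refine ⟨fun i => if h : i < L then s (Fin.castAdd L ⟨i, h⟩) else 0,
    fun i => if h : i < L then s (Fin.natAdd L ⟨i, h⟩) else 0,
    fun i hi => by simp [hi, hs], fun i hi => by simp [hi, hs], funext fun k => ?_⟩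
  induction k using Fin.addCases with
  | left i =>
    rw [pairShift, Fin.addCases_left, dif_pos i.isLt]
    simp [ZMod.val_natCast_of_lt (Nat.lt_succ_of_le (hs _))]
  | right i =>
    rw [pairShift, Fin.addCases_right, dif_pos i.isLt]
    simp [ZMod.val_natCast_of_lt (Nat.lt_succ_of_le (hs _))]

lemma injective_elim_natCast_val_add_one {n : ℕ} [NeZero n] (c : ZMod n) :
    Function.Injective fun x : Option (ZMod n) =>
      x.elim (0 : ZMod (n + 1)) fun y => ((y + c).val + 1 : ℕ) := by
  have hval : ∀ y : ZMod n, (((y + c).val + 1 : ℕ) : ZMod (n + 1)).val = (y + c).val + 1 :=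
    fun y => ZMod.val_natCast_of_lt (by have := ZMod.val_lt (y + c); omega)
  rintro (_ | y) (_ | y') h
  · rfl
  all_goals
    have := congrArg ZMod.val h
    simp only [Option.elim_none, Option.elim_some, hval, ZMod.val_zero] at this
  · omega
  · omega
  · rw [add_left_injective c (ZMod.val_injective n (Nat.succ_injective this))]

lemma exists_isMixed_uniformMarginals_pos {m L : ℕ} (hm : 1 ≤ m) {s : Fin (L + L) → ℕ}
    (hs : s ∈ pureStrats (L + L) (m * (L + L))) (hbox : ∀ k, s k ≤ 2 * m) :
    ∃ ν, IsMixed (L + L) (m * (L + L)) ν ∧ UniformMarginals (L + L) (m * (L + L)) m ν ∧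
      0 < ν s := by
  have : NeZero (2 * m) := ⟨by omega⟩
  obtain ⟨a, b, ha, hb, rfl⟩ := exists_pairShift_zero_eq hbox
  have hab : ∑ i ∈ range L, (a i + b i) = m * (L + L) := by
    rw [← sum_pairShift_zero ha hb, mem_pureStrats.1 hs]
  obtain ⟨c, hc⟩ := exists_shift_card_le_eq L (fun i => 2 * m - a i) b (fun i _ => Nat.sub_le _ _)
    hb (by
      have h := sum_congr rfl fun i hi => Nat.sub_add_cancel (ha i (mem_range.1 hi))
      rw [sum_add_distrib, sum_const, card_range, smul_eq_mul] at h
      rw [sum_add_distrib] at hab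
      linarith)
  -- Row `none` is `s` itself; row `some y` shifts pair `i` by `(y + c i).val + 1 ∈ [1, 2m]`.
  obtain ⟨ν, hν, hνu, hpos⟩ := exists_isMixed_uniformMarginals_of_columns
    (R := Option (ZMod (2 * m))) (by rw [Fintype.card_option, ZMod.card])
    (fun x => pairShift L (2 * m) a b fun i => x.elim 0 fun y => ((y + c i).val + 1 : ℕ))
    (by
      rintro (_ | y)
      · exact hs
      · rw [mem_pureStrats, ← hab]
        exact sum_pairShift_natCast_succ ha hb (fun i => ZMod.val_lt _) (hc y))
    (injective_pairShift a b fun i => injective_elim_natCast_val_add_one (c i))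
    (fun x => pairShift_le L (2 * m) a b _)
  exact ⟨ν, hν, hνu, hpos none⟩

theorem stmt14_general (K m N : ℕ) (hKeven : Even K) (hm : 1 ≤ m) (hN : N = m * K)
    (s : Fin K → ℕ) (hs : s ∈ pureStrats K N) :
    (∃ σA σB, IsNashEq 1 K N σA σB ∧ (0 < σA s ∨ 0 < σB s)) ↔
      ∀ k, (s k : ℝ) ≤ 2 * (N : ℝ) / K := by
  obtain ⟨L, rfl⟩ := hKeven
  subst hN
  obtain ⟨μ, hμ, huμ, -⟩ := exists_isMixed_uniformMarginals_pos hm (s := fun _ => m)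
    (mem_pureStrats.2 (by simp [mul_comm])) fun _ => by omega
  constructor
  · rintro ⟨σA, σB, h, hA | hB⟩ k <;> rw [natCast_le_two_mul_div_iff k.pos.ne']
    · exact le_two_mul_of_isNashEq rfl h hμ huμ hA k
    · exact le_two_mul_of_isNashEq rfl h.symm hμ huμ hB k
  · intro h
    obtain ⟨ν, hν, huν, hνs⟩ := exists_isMixed_uniformMarginals_pos hm hs fun k =>
      (natCast_le_two_mul_div_iff k.pos.ne' _).1 (h k)
    exact ⟨ν, ν, isNashEq_of_uniformMarginals_s14 rfl hν huν hν huν, Or.inl hνs⟩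

theorem stmt14 (K m N : ℕ) (hK : 2 ≤ K) (hKeven : Even K) (hm : 1 ≤ m) (hN : N = m * K)
    (s : Fin K → ℕ) (hs : s ∈ pureStrats K N) :
    (∃ σA σB, IsNashEq 1 K N σA σB ∧ (0 < σA s ∨ 0 < σB s)) ↔
      ∀ k, (s k : ℝ) ≤ 2 * (N : ℝ) / K :=
  stmt14_general K m N hKeven hm hN s hs
end
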